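/- arXiv:2205.05455 — 8 statements merged into one kernel-verified Lean document; each statement's English description precedes it below -/
import Mathlib

section
/- For any deterministic policy π : S → A, the matrix A^π := I + α(γ D P Π^π − D) satisfies ‖A^π‖_∞ ≤ 1 − α d_min (1−γ), where d_min := min_{(s,a)∈S×A} d(s,a). -/
open Matrix

/-- The policy matrix `Π^π ∈ ℝ^{S × (S×A)}` of a deterministic policy `π : S → A`:
`Π^π(s, (s', a)) = 1` if `s' = s` and `a = π s`, else `0`. -/
def policyMatrix {S A : Type*} [DecidableEq S] [DecidableEq A] (π : S → A) :
    Matrix S (S × A) ℝ :=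
  Matrix.of fun s p => if p.1 = s ∧ p.2 = π s then (1 : ℝ) else 0

/-- For any deterministic policy `π : S → A`, the matrix
`A^π := I + α (γ D P Π^π − D)` satisfies `‖A^π‖_∞ ≤ 1 − α d_min (1 − γ)`,
where `‖M‖_∞ = max_i Σ_j |M_{ij}|` and `d_min = min_{(s,a)} d(s,a)`. -/
theorem policy_system_matrix_infty_norm_bound
    {S A : Type*} [Fintype S] [Fintype A] [Nonempty S] [Nonempty A]
    [DecidableEq S] [DecidableEq A]
    (d : S × A → ℝ) (hd : ∀ p, 0 < d p ∧ d p ≤ 1)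
    (P : Matrix (S × A) S ℝ) (hP : ∀ p s, 0 ≤ P p s) (hProw : ∀ p, ∑ s, P p s = 1)
    (α γ : ℝ) (hα : 0 < α ∧ α < 1) (hγ : 0 ≤ γ ∧ γ < 1)
    (π : S → A) :
    (⨆ i : S × A, ∑ j : S × A,
        |((1 : Matrix (S × A) (S × A) ℝ) +
          α • (γ • (Matrix.diagonal d * P * policyMatrix π) - Matrix.diagonal d)) i j|)
      ≤ 1 - α * (⨅ p : S × A, d p) * (1 - γ) := by
  obtain ⟨hα0, hα1⟩ := hα
  obtain ⟨hγ0, hγ1⟩ := hγ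
  set M : Matrix (S × A) (S × A) ℝ := P * policyMatrix π with hMdef
  apply ciSup_le
  intro i
  have hdi0 := (hd i).1
  have hdi1 := (hd i).2
  have hM0 : ∀ j, 0 ≤ M i j := by
    intro j
    apply Finset.sum_nonneg
    intro s _
    exact mul_nonneg (hP i s) (by unfold policyMatrix; dsimp; positivity)
  have hMsum : ∑ j : S × A, M i j = 1 := by
    rw [show (∑ j : S × A, M i j) = ∑ j : S × A, ∑ s, P i s * policyMatrix π s j from rfl,
      Finset.sum_comm]
    rw [← hProw i]
    apply Finset.sum_congr rfl
    intro s _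
    rw [← Finset.mul_sum]
    have : (∑ j : S × A, policyMatrix π s j) = 1 := by
      unfold policyMatrix
      rw [show (∑ j : S × A, (Matrix.of fun s p => if p.1 = s ∧ p.2 = π s then (1:ℝ) else 0) s j)
          = ∑ j : S × A, if j = (s, π s) then (1:ℝ) else 0 from by
        apply Finset.sum_congr rfl; intro j _
        simp [Prod.ext_iff]]
      simp
    rw [this, mul_one]
  have hentry : ∀ j, ((1 : Matrix (S × A) (S × A) ℝ) +
      α • (γ • (Matrix.diagonal d * P * policyMatrix π) - Matrix.diagonal d)) i j
      = (if i = j then (1 : ℝ) - α * d i else 0) + α * γ * (d i * M i j) := by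
    intro j
    have : (Matrix.diagonal d * P * policyMatrix π) i j = d i * M i j := by
      rw [Matrix.mul_assoc, ← hMdef, Matrix.diagonal_mul]
    simp only [Matrix.add_apply, Matrix.smul_apply, Matrix.sub_apply, Matrix.one_apply,
      Matrix.diagonal_apply, this, smul_eq_mul]
    by_cases h : i = j <;> simp [h] <;> ring
  have hnonneg : ∀ j, 0 ≤ ((1 : Matrix (S × A) (S × A) ℝ) +
      α • (γ • (Matrix.diagonal d * P * policyMatrix π) - Matrix.diagonal d)) i j := by
    intro j
    rw [hentry j]
    have h2 : 0 ≤ α * γ * (d i * M i j) :=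
      mul_nonneg (mul_nonneg hα0.le hγ0) (mul_nonneg hdi0.le (hM0 j))
    by_cases h : i = j
    · subst h
      rw [if_pos rfl]
      nlinarith
    · simp [h, h2]
  have hsum : ∑ j : S × A,
      |((1 : Matrix (S × A) (S × A) ℝ) +
        α • (γ • (Matrix.diagonal d * P * policyMatrix π) - Matrix.diagonal d)) i j|
      = 1 - α * d i * (1 - γ) := by
    rw [Finset.sum_congr rfl fun j _ => abs_of_nonneg (hnonneg j),
      Finset.sum_congr rfl fun j _ => hentry j, Finset.sum_add_distrib]
    rw [Finset.sum_ite_eq Finset.univ i (fun _ => (1 : ℝ) - α * d i)]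
    simp only [Finset.mem_univ, if_pos]
    rw [← Finset.mul_sum, ← Finset.mul_sum, hMsum]
    ring
  rw [hsum]
  have hinf : (⨅ p : S × A, d p) ≤ d i :=
    ciInf_le (Set.Finite.bddBelow (Set.finite_range d)) i
  nlinarith [mul_le_mul_of_nonneg_left hinf (le_of_lt hα0)]
end

section
/- For any deterministic policy π : S → A, every entry of the matrix A^π := I + α(γ D P Π^π − D) is nonnegative. -/
open Matrix

/-- For any deterministic policy `π : S → A`, every entry of the matrix
`A^π := I + α (γ D P Π^π − D)` is nonnegative. -/
theorem policy_system_matrix_nonneg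
    {S A : Type*} [Fintype S] [Fintype A] [Nonempty S] [Nonempty A]
    [DecidableEq S] [DecidableEq A]
    (d : S × A → ℝ) (hd : ∀ p, 0 < d p ∧ d p ≤ 1)
    (P : Matrix (S × A) S ℝ) (hP : ∀ p s, 0 ≤ P p s) (hProw : ∀ p, ∑ s, P p s = 1)
    (α γ : ℝ) (hα : 0 < α ∧ α < 1) (hγ : 0 ≤ γ ∧ γ < 1)
    (π : S → A) :
    ∀ i j : S × A,
      0 ≤ ((1 : Matrix (S × A) (S × A) ℝ) +
            α • (γ • (Matrix.diagonal d * P * policyMatrix π) - Matrix.diagonal d)) i j := by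
  intro i j
  have hentry : (Matrix.diagonal d * P * policyMatrix π) i j
      = d i * P i j.1 * (if j.2 = π j.1 then (1:ℝ) else 0) := by
    rw [Matrix.mul_apply]
    rw [Finset.sum_eq_single j.1]
    · simp [Matrix.diagonal_mul, policyMatrix]
    · intro s _ hs
      simp [policyMatrix, Ne.symm hs]
    · simp
  simp only [Matrix.add_apply, Matrix.smul_apply, Matrix.sub_apply, Matrix.one_apply,
    Matrix.diagonal_apply, hentry, smul_eq_mul]
  set c := d i * P i j.1 * (if j.2 = π j.1 then (1:ℝ) else 0) with hc
  have hc0 : 0 ≤ c := by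
    have := (hd i).1.le
    have := hP i j.1
    rw [hc]; split <;> nlinarith
  by_cases h : i = j
  · simp only [h, if_pos rfl]
    have hd1 := hd j
    have hP1 : P j j.1 ≤ 1 := by
      rw [← hProw j]
      exact Finset.single_le_sum (fun s _ => hP j s) (Finset.mem_univ j.1)
    have hc1 : c ≤ d j := by
      have := hP j j.1
      rw [hc, h]; split <;> nlinarith [hd1.1, hd1.2]
    norm_num
    nlinarith [hα.2, mul_nonneg hα.1.le (mul_nonneg hγ.1 hc0),
      mul_le_mul_of_nonneg_left hd1.2 hα.1.le]
  · simp only [if_neg h]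
    have h0 : (0:ℝ) ≤ α * (γ * c) := mul_nonneg hα.1.le (mul_nonneg hγ.1 hc0)
    nlinarith [h0]
end

section
/- Let (π_k)_{k≥0} be an arbitrary sequence of deterministic policies π_k : S → A and define A_k := I + α(γ D P Π^{π_k} − D). Then the switching linear system x_{k+1} = A_k x_k with initial condition x_0 ∈ ℝ^{S×A} satisfies ‖x_k‖_∞ ≤ ρ^k ‖x_0‖_∞ for all k ≥ 0, where ρ := 1 − α d_min(1−γ) and d_min := min_{(s,a)∈S×A} d(s,a). -/
open Matrix

lemma policyMatrix_mulVec {S A : Type*} [Fintype S] [Fintype A]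
    [DecidableEq S] [DecidableEq A] (π : S → A) (y : S × A → ℝ) :
    (policyMatrix π).mulVec y = fun s => y (s, π s) := by
  funext s
  simp only [policyMatrix, Matrix.mulVec, dotProduct, Matrix.of_apply]
  rw [Fintype.sum_prod_type]
  simp [ite_and, Finset.sum_ite_eq]

/-- For an arbitrary sequence of deterministic policies `π_k : S → A` and
`A_k := I + α (γ D P Π^{π_k} − D)`, the switching linear system `x_{k+1} = A_k x_k`
satisfies `‖x_k‖_∞ ≤ ρ^k ‖x_0‖_∞` for all `k ≥ 0`, where `ρ := 1 − α d_min (1 − γ)`. -/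
theorem switching_system_exponentially_stable
    {S A : Type*} [Fintype S] [Fintype A] [Nonempty S] [Nonempty A]
    [DecidableEq S] [DecidableEq A]
    (d : S × A → ℝ) (hd : ∀ p, 0 < d p ∧ d p ≤ 1)
    (P : Matrix (S × A) S ℝ) (hP : ∀ p s, 0 ≤ P p s) (hProw : ∀ p, ∑ s, P p s = 1)
    (α γ : ℝ) (hα : 0 < α ∧ α < 1) (hγ : 0 ≤ γ ∧ γ < 1)
    (π : ℕ → S → A)
    (x : ℕ → S × A → ℝ)
    (hx : ∀ k, x (k + 1) =
      ((1 : Matrix (S × A) (S × A) ℝ) +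
        α • (γ • (Matrix.diagonal d * P * policyMatrix (π k)) - Matrix.diagonal d)).mulVec
        (x k)) :
    ∀ k, (⨆ i : S × A, |x k i|) ≤
      (1 - α * (⨅ p : S × A, d p) * (1 - γ)) ^ k * (⨆ i : S × A, |x 0 i|) := by
  obtain ⟨hα0, hα1⟩ := hα
  obtain ⟨hγ0, hγ1⟩ := hγ
  set dm := ⨅ p : S × A, d p with hdm
  have hBdd : BddBelow (Set.range d) := (Set.finite_range d).bddBelow
  have hdmle : ∀ p, dm ≤ d p := fun p => ciInf_le hBdd p
  obtain ⟨p0⟩ := (inferInstance : Nonempty (S × A))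
  have hdm0 : 0 < dm := by
    obtain ⟨q, hq⟩ := Finite.exists_min d
    have hq' : dm = d q := le_antisymm (hdmle q) (le_ciInf hq)
    rw [hq']; exact (hd q).1
  have hdm1 : dm ≤ 1 := (hdmle p0).trans (hd p0).2
  set ρ := 1 - α * dm * (1 - γ) with hρ
  have hρ0 : 0 ≤ ρ := by
    have hab : α * dm ≤ 1 := mul_le_one₀ hα1.le hdm0.le hdm1
    have : α * dm * (1 - γ) ≤ 1 := mul_le_one₀ hab (by linarith) (by linarith)
    rw [hρ]; linarith
  have hMbdd : ∀ k, BddAbove (Set.range fun i => |x k i|) :=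
    fun k => (Set.finite_range _).bddAbove
  have hM0 : ∀ k, 0 ≤ ⨆ i, |x k i| :=
    fun k => le_ciSup_of_le (hMbdd k) p0 (abs_nonneg _)
  have key : ∀ k, (⨆ i, |x (k+1) i|) ≤ ρ * ⨆ i, |x k i| := by
    intro k
    set M := ⨆ i, |x k i| with hMdef
    have hle : ∀ i, |x k i| ≤ M := fun i => le_ciSup (hMbdd k) i
    apply ciSup_le
    intro p
    have hform : x (k+1) p = (1 - α * d p) * x k p +
        α * γ * d p * ∑ s, P p s * x k (s, π k s) := by
      rw [hx k]
      rw [Matrix.add_mulVec, Matrix.one_mulVec, Matrix.smul_mulVec,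
        Matrix.sub_mulVec, Matrix.smul_mulVec,
        ← Matrix.mulVec_mulVec, ← Matrix.mulVec_mulVec, policyMatrix_mulVec]
      simp only [Pi.add_apply, Pi.smul_apply, Pi.sub_apply, smul_eq_mul,
        Matrix.mulVec, dotProduct, Matrix.diagonal_apply, ite_mul, zero_mul,
        Finset.sum_ite_eq, Finset.sum_ite_eq', Finset.mem_univ, if_true]
      ring
    have hsum : |∑ s, P p s * x k (s, π k s)| ≤ M := by
      calc |∑ s, P p s * x k (s, π k s)| ≤ ∑ s, |P p s * x k (s, π k s)| :=
            Finset.abs_sum_le_sum_abs _ _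
        _ ≤ ∑ s, P p s * M := by
            apply Finset.sum_le_sum
            intro s _
            rw [abs_mul, abs_of_nonneg (hP p s)]
            exact mul_le_mul_of_nonneg_left (hle (s, π k s)) (hP p s)
        _ = M := by rw [← Finset.sum_mul, hProw p, one_mul]
    have h1 : 0 ≤ 1 - α * d p := by nlinarith [(hd p).1, (hd p).2]
    calc |x (k+1) p| ≤ (1 - α * d p) * |x k p| + α * γ * d p * |∑ s, P p s * x k (s, π k s)| := by
          rw [hform]
          refine (abs_add_le _ _).trans ?_
          rw [abs_mul, abs_mul, abs_of_nonneg h1]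
          have : |α * γ * d p| = α * γ * d p :=
            abs_of_nonneg (mul_nonneg (mul_nonneg hα0.le hγ0) (hd p).1.le)
          rw [this]
      _ ≤ (1 - α * d p) * M + α * γ * d p * M := by
          gcongr
          · exact hle p
          · exact mul_nonneg (mul_nonneg hα0.le hγ0) (hd p).1.le
      _ = (1 - α * d p * (1 - γ)) * M := by ring
      _ ≤ ρ * M := by
          have hM : (0:ℝ) ≤ M := hM0 k
          have hcoef : 1 - α * d p * (1 - γ) ≤ ρ := by
            rw [hρ]
            have h2 : α * (1 - γ) * dm ≤ α * (1 - γ) * d p :=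
              mul_le_mul_of_nonneg_left (hdmle p) (by nlinarith)
            nlinarith
          exact mul_le_mul_of_nonneg_right hcoef hM
  intro k
  induction k with
  | zero => simp
  | succ n ih =>
    calc (⨆ i, |x (n+1) i|) ≤ ρ * ⨆ i, |x n i| := key n
      _ ≤ ρ * (ρ ^ n * ⨆ i, |x 0 i|) := mul_le_mul_of_nonneg_left ih hρ0
      _ = ρ ^ (n+1) * ⨆ i, |x 0 i| := by ring
end

section
/- Let Q* : S×A → ℝ, let π* be a policy greedy with respect to Q*, and set Π* := Π^{π*}, A* := I + α(γ D P Π* − D). Let (Q_k)_{k≥0} and (Q^L_k)_{k≥0} be sequences in ℝ^{S×A} and (w_k)_{k≥0} arbitrary vectors in ℝ^{S×A}; for each k let π_k be a policy greedy with respect to Q_k, and set Π_k := Π^{π_k}, A_k := I + α(γ D P Π_k − D). Suppose that for all k ≥ 0: Q_{k+1} − Q* = A_k(Q_k − Q*) + αγ D P(Π_k − Π*)Q* + α w_k and Q^L_{k+1} − Q* = A*(Q^L_k − Q*) + α w_k. If Q^L_0 − Q* ≤ Q_0 − Q* componentwise, then Q^L_k − Q* ≤ Q_k − Q* componentwise for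 all k ≥ 0. -/
/-! Writing `A_π := I + α(γ D P Π^π − D)`, the switching identity
`A_k (x − Q*) + αγ D P (Π_k − Π*) Q* = A* (x − Q*) + αγ D P (Π_k − Π*) x` at `x = Q_k`,
together with `Π_k Q_k ≥ Π* Q_k` (greediness) and `D P ≥ 0`, shows that the Q-learning step
dominates the step of the comparison system. Since `d ≤ 1` and `α < 1`, the matrix `A*` is
entrywise nonnegative, hence monotone, and the bound propagates by induction on `k`. -/

open Matrix

/-- A deterministic policy `π` is greedy with respect to `Q : S × A → ℝ` if
`Q(s, π s) = max_{a} Q(s, a)` for every state `s`. -/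
def IsGreedy {S A : Type*} [Fintype A] [Nonempty A] (π : S → A) (Q : S × A → ℝ) : Prop :=
  ∀ s, Q (s, π s) = ⨆ a : A, Q (s, a)

section NonnegMatrix

variable {R m n l : Type*} [CommRing R] [PartialOrder R] [IsOrderedRing R]

theorem Matrix.mulVec_mono_of_nonneg [Fintype n] {M : Matrix m n R} (hM : ∀ i j, 0 ≤ M i j)
    {x y : n → R} (hxy : x ≤ y) : M *ᵥ x ≤ M *ᵥ y :=
  fun i => dotProduct_le_dotProduct_of_nonneg_left hxy (hM i)

theorem Matrix.mulVec_nonneg_of_nonneg [Fintype n] {M : Matrix m n R} (hM : ∀ i j, 0 ≤ M i j)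
    {x : n → R} (hx : 0 ≤ x) : 0 ≤ M *ᵥ x := by
  simpa using M.mulVec_mono_of_nonneg hM hx

theorem Matrix.mul_apply_nonneg [Fintype n] {M : Matrix m n R} {N : Matrix n l R}
    (hM : ∀ i j, 0 ≤ M i j) (hN : ∀ i j, 0 ≤ N i j) (i : m) (j : l) : 0 ≤ (M * N) i j :=
  dotProduct_nonneg_of_nonneg (hM i) fun k => hN k j

theorem Matrix.diagonal_mul_apply_nonneg [Fintype m] [DecidableEq m] {d : m → R}
    {M : Matrix m n R} (hd : 0 ≤ d) (hM : ∀ i j, 0 ≤ M i j) (i : m) (j : n) :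
    0 ≤ (diagonal d * M) i j := by
  rw [diagonal_mul]
  exact mul_nonneg (hd i) (hM i j)

theorem Matrix.one_add_smul_sub_diagonal_apply_nonneg [DecidableEq n] {M : Matrix n n R}
    {d : n → R} {α γ : R} (hα : 0 ≤ α) (hγ : 0 ≤ γ) (hM : ∀ i j, 0 ≤ M i j)
    (hαd : ∀ i, α * d i ≤ 1) (i j : n) : 0 ≤ (1 + α • (γ • M - diagonal d)) i j := by
  have hαγM : 0 ≤ α * (γ * M i j) := mul_nonneg hα (mul_nonneg hγ (hM i j))
  rcases eq_or_ne i j with rfl | hij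
  · simp only [add_apply, one_apply_eq, smul_apply, sub_apply, diagonal_apply_eq, smul_eq_mul]
    linear_combination hαγM + (sub_nonneg.2 (hαd i))
  · simpa [hij] using hαγM

end NonnegMatrix

section Policy

variable {S A : Type*}

theorem IsGreedy.apply_le [Fintype A] [Nonempty A] {π : S → A} {Q : S × A → ℝ}
    (hπ : IsGreedy π Q) (s : S) (a : A) : Q (s, a) ≤ Q (s, π s) :=
  hπ s ▸ le_ciSup (f := fun a => Q (s, a)) (Set.finite_range _).bddAbove a

variable [DecidableEq S] [DecidableEq A]

theorem policyMatrix_apply_nonneg (π : S → A) (s : S) (p : S × A) : 0 ≤ policyMatrix π s p := by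
  rw [policyMatrix, of_apply]
  split_ifs <;> norm_num

theorem policyMatrix_mulVec_s4 [Fintype S] [Fintype A] (π : S → A) (v : S × A → ℝ) (s : S) :
    (policyMatrix π *ᵥ v) s = v (s, π s) := by
  simp [policyMatrix, mulVec, dotProduct, Fintype.sum_prod_type, ite_and]

theorem IsGreedy.policyMatrix_mulVec_le [Fintype S] [Fintype A] [Nonempty A] {π : S → A}
    {Q : S × A → ℝ} (hπ : IsGreedy π Q) (σ : S → A) :
    policyMatrix σ *ᵥ Q ≤ policyMatrix π *ᵥ Q := fun s => by
  simpa only [policyMatrix_mulVec_s4] using hπ.apply_le s (σ s)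

theorem IsGreedy.comparison_mulVec_le [Fintype S] [Fintype A] [Nonempty A]
    {M : Matrix (S × A) S ℝ} (hM : ∀ i j, 0 ≤ M i j) (D : Matrix (S × A) (S × A) ℝ) {α γ : ℝ}
    (hαγ : 0 ≤ α * γ) {π : S → A} {Q : S × A → ℝ} (hπ : IsGreedy π Q) (σ : S → A)
    (Q' : S × A → ℝ) :
    (1 + α • (γ • (M * policyMatrix σ) - D)) *ᵥ (Q - Q') ≤
      (1 + α • (γ • (M * policyMatrix π) - D)) *ᵥ (Q - Q') +
        (α * γ) • ((M * (policyMatrix π - policyMatrix σ)) *ᵥ Q') := by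
  have hswitch : 1 + α • (γ • (M * policyMatrix π) - D) =
      1 + α • (γ • (M * policyMatrix σ) - D) +
        (α * γ) • (M * (policyMatrix π - policyMatrix σ)) := by
    rw [Matrix.mul_sub]
    module
  have hgain : 0 ≤ (M * (policyMatrix π - policyMatrix σ)) *ᵥ Q := by
    rw [← mulVec_mulVec, sub_mulVec]
    exact mulVec_nonneg_of_nonneg hM (sub_nonneg.2 (hπ.policyMatrix_mulVec_le σ))
  have hsplit : (1 + α • (γ • (M * policyMatrix π) - D)) *ᵥ (Q - Q') +
        (α * γ) • ((M * (policyMatrix π - policyMatrix σ)) *ᵥ Q') =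
      (1 + α • (γ • (M * policyMatrix σ) - D)) *ᵥ (Q - Q') +
        (α * γ) • ((M * (policyMatrix π - policyMatrix σ)) *ᵥ Q) := by
    rw [hswitch, add_mulVec, smul_mulVec, add_assoc, ← smul_add, ← mulVec_add, sub_add_cancel]
  rw [hsplit]
  exact le_add_of_nonneg_right (smul_nonneg hαγ hgain)

end Policy

theorem lower_comparison_system_bound_general
    {S A : Type*} [Fintype S] [Fintype A] [Nonempty A]
    [DecidableEq S] [DecidableEq A]
    (d : S × A → ℝ) (hd : ∀ p, 0 < d p ∧ d p ≤ 1)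
    (P : Matrix (S × A) S ℝ) (hP : ∀ p s, 0 ≤ P p s)
    (α γ : ℝ) (hα : 0 < α ∧ α < 1) (hγ : 0 ≤ γ ∧ γ < 1)
    (Qstar : S × A → ℝ) (πstar : S → A)
    (Q QL : ℕ → S × A → ℝ) (w : ℕ → S × A → ℝ)
    (π : ℕ → S → A) (hπ : ∀ k, IsGreedy (π k) (Q k))
    (hQ : ∀ k, Q (k + 1) - Qstar =
      ((1 : Matrix (S × A) (S × A) ℝ) +
        α • (γ • (Matrix.diagonal d * P * policyMatrix (π k)) - Matrix.diagonal d)).mulVec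
        (Q k - Qstar)
      + (α * γ) •
          (Matrix.diagonal d * P * (policyMatrix (π k) - policyMatrix πstar)).mulVec Qstar
      + α • w k)
    (hQL : ∀ k, QL (k + 1) - Qstar =
      ((1 : Matrix (S × A) (S × A) ℝ) +
        α • (γ • (Matrix.diagonal d * P * policyMatrix πstar) - Matrix.diagonal d)).mulVec
        (QL k - Qstar)
      + α • w k)
    (h0 : QL 0 - Qstar ≤ Q 0 - Qstar) :
    ∀ k, QL k - Qstar ≤ Q k - Qstar := by
  have hM : ∀ i j, 0 ≤ (diagonal d * P) i j :=
    diagonal_mul_apply_nonneg (fun p => (hd p).1.le) hP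
  have hAstar : ∀ i j,
      0 ≤ (1 + α • (γ • (diagonal d * P * policyMatrix πstar) - diagonal d) :
        Matrix (S × A) (S × A) ℝ) i j :=
    one_add_smul_sub_diagonal_apply_nonneg hα.1.le hγ.1
      (mul_apply_nonneg hM (policyMatrix_apply_nonneg πstar))
      fun p => mul_le_one₀ hα.2.le (hd p).1.le (hd p).2
  intro k
  induction k with
  | zero => exact h0
  | succ k ih =>
    rw [hQ k, hQL k]
    gcongr ?_ + _
    exact (mulVec_mono_of_nonneg hAstar ih).trans
      ((hπ k).comparison_mulVec_le hM _ (mul_nonneg hα.1.le hγ.1) πstar Qstar)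

/-- The lower comparison system bounds the Q-learning iterates from below:
if `Q^L_0 − Q* ≤ Q_0 − Q*` componentwise, then `Q^L_k − Q* ≤ Q_k − Q*` for all `k`. -/
theorem lower_comparison_system_bound
    {S A : Type*} [Fintype S] [Fintype A] [Nonempty S] [Nonempty A]
    [DecidableEq S] [DecidableEq A]
    (d : S × A → ℝ) (hd : ∀ p, 0 < d p ∧ d p ≤ 1)
    (P : Matrix (S × A) S ℝ) (hP : ∀ p s, 0 ≤ P p s) (hProw : ∀ p, ∑ s, P p s = 1)
    (α γ : ℝ) (hα : 0 < α ∧ α < 1) (hγ : 0 ≤ γ ∧ γ < 1)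
    (Qstar : S × A → ℝ) (πstar : S → A) (hπstar : IsGreedy πstar Qstar)
    (Q QL : ℕ → S × A → ℝ) (w : ℕ → S × A → ℝ)
    (π : ℕ → S → A) (hπ : ∀ k, IsGreedy (π k) (Q k))
    (hQ : ∀ k, Q (k + 1) - Qstar =
      ((1 : Matrix (S × A) (S × A) ℝ) +
        α • (γ • (Matrix.diagonal d * P * policyMatrix (π k)) - Matrix.diagonal d)).mulVec
        (Q k - Qstar)
      + (α * γ) •
          (Matrix.diagonal d * P * (policyMatrix (π k) - policyMatrix πstar)).mulVec Qstar
      + α • w k)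
    (hQL : ∀ k, QL (k + 1) - Qstar =
      ((1 : Matrix (S × A) (S × A) ℝ) +
        α • (γ • (Matrix.diagonal d * P * policyMatrix πstar) - Matrix.diagonal d)).mulVec
        (QL k - Qstar)
      + α • w k)
    (h0 : QL 0 - Qstar ≤ Q 0 - Qstar) :
    ∀ k, QL k - Qstar ≤ Q k - Qstar :=
  lower_comparison_system_bound_general d hd P hP α γ hα hγ Qstar πstar Q QL w π hπ hQ hQL h0
end

section
/- Let n ≥ 1, let A be an n×n real matrix with ‖A‖_∞ ≤ ρ := 1 − α d_min(1−γ), let x₀ ∈ ℝⁿ, and let (W_k)_{k≥0} be symmetric positive semidefinite n×n matrices with λ_max(W_k) ≤ 9/(1−γ)² for all k. Define X₀ := x₀x₀ᵀ and X_{k+1} := A X_k Aᵀ + α² W_k for k ≥ 0. Then for all k ≥ 0, tr(X_k) ≤ 9 n² α / (d_min (1−γ)³) + ‖x₀‖₂² n² ρ^{2k}. -/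
/-!
Track the largest entry `e_k = max |(X_k)ᵢⱼ|` instead of the trace. A row-sum bound `ρ` on `A`
gives `|(A M Aᵀ)ᵢⱼ| ≤ ρ² max |M|`, and positive semidefiniteness bounds every entry of `W_k` by
its largest diagonal entry, hence by `c = 9 / (1-γ)²`. So `e_{k+1} ≤ ρ² e_k + α² c`, and since
`α² c = (1 - ρ) D ≤ (1 - ρ²) D` with `D = 9α / (d_min (1-γ)³)`, induction gives
`e_k ≤ ‖x₀‖² ρ^{2k} + D`. Summing the diagonal costs a factor `n ≤ n²`.
-/

open Finset

namespace Matrix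

variable {l m n o : Type*} [Fintype m] [Fintype n]

theorem abs_mul_mul_transpose_apply_le (A : Matrix l m ℝ) (M : Matrix m n ℝ) (B : Matrix o n ℝ)
    {b : ℝ} (hM : ∀ p q, |M p q| ≤ b) (i : l) (j : o) :
    |(A * M * Bᵀ) i j| ≤ (∑ p, |A i p|) * b * ∑ q, |B j q| := by
  have hexp : (A * M * Bᵀ) i j = ∑ p, ∑ q, A i p * M p q * B j q := by
    simp only [mul_apply, transpose_apply, sum_mul]
    exact sum_comm
  calc |(A * M * Bᵀ) i j| ≤ ∑ p, ∑ q, |A i p| * |M p q| * |B j q| := by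
        rw [hexp]
        refine (abs_sum_le_sum_abs _ _).trans (sum_le_sum fun p _ => ?_)
        refine (abs_sum_le_sum_abs _ _).trans_eq ?_
        simp only [abs_mul]
    _ ≤ ∑ p, ∑ q, |A i p| * b * |B j q| := by gcongr with p _ q _; exact hM p q
    _ = (∑ p, |A i p|) * b * ∑ q, |B j q| := by simp only [sum_mul, mul_sum]; exact sum_comm

theorem PosSemidef.two_mul_abs_apply_le {W : Matrix n n ℝ} (hW : W.PosSemidef) (i j : n) :
    2 * |W i j| ≤ W i i + W j j := by
  classical
  have hquad : ∀ s : ℝ, 0 ≤ W i i + 2 * s * W i j + s ^ 2 * W j j := fun s => by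
    have h := hW.dotProduct_mulVec_nonneg (Pi.single i 1 + Pi.single j s)
    simp only [star_trivial, mulVec_add, dotProduct_add, add_dotProduct, single_dotProduct,
      mulVec_single, Pi.smul_apply, col_apply, op_smul_eq_mul, one_mul, mul_one] at h
    have hsymm : W j i = W i j := by simpa using hW.isHermitian.apply i j
    rw [hsymm] at h
    linarith
  suffices |W i j| ≤ (W i i + W j j) / 2 by linarith
  rw [abs_le]
  constructor <;> linarith [hquad 1, hquad (-1)]

theorem PosSemidef.abs_apply_le_of_diag_le {W : Matrix n n ℝ} (hW : W.PosSemidef) {c : ℝ}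
    (hc : ∀ i, W i i ≤ c) (i j : n) : |W i j| ≤ c := by
  linarith [hW.two_mul_abs_apply_le i j, hc i, hc j]

theorem diag_le_of_dotProduct_mulVec_le {W : Matrix n n ℝ} {c : ℝ}
    (hW : ∀ v : n → ℝ, ∑ i, v i ^ 2 = 1 → v ⬝ᵥ W *ᵥ v ≤ c) (i : n) : W i i ≤ c := by
  classical
  simpa [single_dotProduct, mulVec_single] using hW (Pi.single i 1) (by simp [Pi.single_apply])

theorem abs_vecMulVec_self_apply_le (x : n → ℝ) (i j : n) :
    |vecMulVec x x i j| ≤ ∑ k, x k ^ 2 := by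
  have hsq : ∀ k, x k ^ 2 ≤ ∑ k, x k ^ 2 := fun k =>
    single_le_sum (f := fun k => x k ^ 2) (fun _ _ => sq_nonneg _) (mem_univ k)
  rw [vecMulVec_apply, abs_mul]
  nlinarith [hsq i, hsq j, sq_abs (x i), sq_abs (x j), abs_nonneg (x i), abs_nonneg (x j)]

theorem trace_le_card_mul_of_abs_diag_le {X : Matrix n n ℝ} {b : ℝ} (hX : ∀ i, |X i i| ≤ b) :
    X.trace ≤ Fintype.card n * b :=
  calc X.trace = ∑ i, X i i := rfl
    _ ≤ ∑ _i : n, b := sum_le_sum fun i _ => (le_abs_self _).trans (hX i)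
    _ = Fintype.card n * b := by simp

theorem abs_apply_le_of_stein_recursion {ρ w S D : ℝ} (A : Matrix n n ℝ)
    (Q X : ℕ → Matrix n n ℝ) (hρ : 0 ≤ ρ) (hA : ∀ i, ∑ j, |A i j| ≤ ρ)
    (hQ : ∀ k i j, |Q k i j| ≤ w) (hD : 0 ≤ D) (hw : w ≤ (1 - ρ ^ 2) * D)
    (hX0 : ∀ i j, |X 0 i j| ≤ S) (hX : ∀ k, X (k + 1) = A * X k * Aᵀ + Q k) :
    ∀ k i j, |X k i j| ≤ S * ρ ^ (2 * k) + D := by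
  intro k
  induction k with
  | zero => simpa using fun i j => (hX0 i j).trans (le_add_of_nonneg_right hD)
  | succ k ih =>
    intro i j
    have hB : 0 ≤ S * ρ ^ (2 * k) + D := (abs_nonneg _).trans (ih i j)
    have hAXA : |(A * X k * Aᵀ) i j| ≤ ρ * (S * ρ ^ (2 * k) + D) * ρ :=
      (abs_mul_mul_transpose_apply_le A (X k) A ih i j).trans
        (mul_le_mul (mul_le_mul_of_nonneg_right (hA i) hB) (hA j)
          (sum_nonneg fun _ _ => abs_nonneg _) (mul_nonneg hρ hB))
    calc |X (k + 1) i j| ≤ |(A * X k * Aᵀ) i j| + |Q k i j| := by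
          rw [hX, add_apply]; exact abs_add_le _ _
      _ ≤ ρ * (S * ρ ^ (2 * k) + D) * ρ + (1 - ρ ^ 2) * D :=
          add_le_add hAXA ((hQ k i j).trans hw)
      _ = S * ρ ^ (2 * (k + 1)) + D := by ring

end Matrix

open Matrix

theorem autocorrelation_trace_bound_general
    (n : ℕ)
    (α γ dmin : ℝ) (hα : 0 < α ∧ α < 1) (hγ : 0 ≤ γ ∧ γ < 1) (hd : 0 < dmin ∧ dmin ≤ 1)
    (A : Matrix (Fin n) (Fin n) ℝ)
    (hA : (⨆ i, ∑ j, |A i j|) ≤ 1 - α * dmin * (1 - γ))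
    (x₀ : Fin n → ℝ)
    (W : ℕ → Matrix (Fin n) (Fin n) ℝ)
    (hWpsd : ∀ k, (W k).PosSemidef)
    (hWmax : ∀ k (v : Fin n → ℝ), ∑ i, v i ^ 2 = 1 → v ⬝ᵥ (W k).mulVec v ≤ 9 / (1 - γ) ^ 2)
    (X : ℕ → Matrix (Fin n) (Fin n) ℝ)
    (hX0 : X 0 = vecMulVec x₀ x₀)
    (hXrec : ∀ k, X (k + 1) = A * X k * Aᵀ + (α ^ 2) • W k) :
    ∀ k, (X k).trace ≤
      9 * (n : ℝ) ^ 2 * α / (dmin * (1 - γ) ^ 3) +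
        (∑ i, x₀ i ^ 2) * (n : ℝ) ^ 2 * (1 - α * dmin * (1 - γ)) ^ (2 * k) := by
  intro k
  obtain ⟨hα0, -⟩ := hα
  obtain ⟨-, hγ1⟩ := hγ
  obtain ⟨hd0, -⟩ := hd
  set ρ := 1 - α * dmin * (1 - γ)
  set c := 9 / (1 - γ) ^ 2
  set D := 9 * α / (dmin * (1 - γ) ^ 3)
  set S := ∑ i, x₀ i ^ 2
  have h1γ : 0 < 1 - γ := by linarith
  have hρ0 : 0 ≤ ρ := (Real.iSup_nonneg fun i => sum_nonneg fun j _ => abs_nonneg (A i j)).trans hA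
  have hρ1 : ρ ≤ 1 := by simp only [ρ]; nlinarith [mul_pos hα0 hd0]
  have hD : 0 ≤ D := by positivity
  have hnoise : α ^ 2 * c ≤ (1 - ρ ^ 2) * D := by
    have hcD : α ^ 2 * c = (1 - ρ) * D := by simp only [ρ, c, D]; field_simp; ring
    nlinarith [mul_nonneg (mul_nonneg hρ0 (sub_nonneg.2 hρ1)) hD]
  have hWentry : ∀ k i j, |(α ^ 2 • W k) i j| ≤ α ^ 2 * c := fun k i j => by
    rw [Matrix.smul_apply, smul_eq_mul, abs_mul, abs_of_nonneg (sq_nonneg α)]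
    exact mul_le_mul_of_nonneg_left ((hWpsd k).abs_apply_le_of_diag_le
      (diag_le_of_dotProduct_mulVec_le (hWmax k)) i j) (sq_nonneg α)
  have hXentry := abs_apply_le_of_stein_recursion A (fun k => α ^ 2 • W k) X hρ0
    (fun i => (le_ciSup (Finite.bddAbove_range _) i).trans hA) hWentry hD hnoise
    (fun i j => hX0 ▸ abs_vecMulVec_self_apply_le x₀ i j) hXrec k
  have hn : (n : ℝ) ≤ (n : ℝ) ^ 2 := by exact_mod_cast Nat.le_self_pow two_ne_zero n
  calc (X k).trace ≤ n * (S * ρ ^ (2 * k) + D) := by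
        simpa using trace_le_card_mul_of_abs_diag_le fun i => hXentry i i
    _ ≤ (n : ℝ) ^ 2 * (S * ρ ^ (2 * k) + D) := by gcongr
    _ = 9 * (n : ℝ) ^ 2 * α / (dmin * (1 - γ) ^ 3) + S * (n : ℝ) ^ 2 * ρ ^ (2 * k) := by
        simp only [D]; ring

/-- Bounded trace of the autocorrelation recursion
`X₀ = x₀x₀ᵀ`, `X_{k+1} = A X_k Aᵀ + α² W_k`, where `‖A‖_∞ ≤ ρ := 1 − α d_min (1−γ)` and
the symmetric PSD matrices `W_k` satisfy `λ_max(W_k) ≤ 9/(1−γ)²`: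
`tr(X_k) ≤ 9 n² α / (d_min (1−γ)³) + ‖x₀‖₂² n² ρ^{2k}`. -/
theorem autocorrelation_trace_bound
    (n : ℕ) (hn : 1 ≤ n)
    (α γ dmin : ℝ) (hα : 0 < α ∧ α < 1) (hγ : 0 ≤ γ ∧ γ < 1) (hd : 0 < dmin ∧ dmin ≤ 1)
    (A : Matrix (Fin n) (Fin n) ℝ)
    (hA : (⨆ i, ∑ j, |A i j|) ≤ 1 - α * dmin * (1 - γ))
    (x₀ : Fin n → ℝ)
    (W : ℕ → Matrix (Fin n) (Fin n) ℝ)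
    (hWpsd : ∀ k, (W k).PosSemidef)
    (hWmax : ∀ k (v : Fin n → ℝ), ∑ i, v i ^ 2 = 1 → v ⬝ᵥ (W k).mulVec v ≤ 9 / (1 - γ) ^ 2)
    (X : ℕ → Matrix (Fin n) (Fin n) ℝ)
    (hX0 : X 0 = vecMulVec x₀ x₀)
    (hXrec : ∀ k, X (k + 1) = A * X k * Aᵀ + (α ^ 2) • W k) :
    ∀ k, (X k).trace ≤
      9 * (n : ℝ) ^ 2 * α / (dmin * (1 - γ) ^ 3) +
        (∑ i, x₀ i ^ 2) * (n : ℝ) ^ 2 * (1 - α * dmin * (1 - γ)) ^ (2 * k) :=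
  autocorrelation_trace_bound_general n α γ dmin hα hγ hd A hA x₀ W hWpsd hWmax X hX0 hXrec
end

section
/- Let A be an n×n real matrix, X₀ a symmetric positive semidefinite n×n matrix, α ≥ 0, and (W_k)_{k≥0} symmetric positive semidefinite n×n matrices with λ_max(W_j) ≤ W_max for all j ≥ 0. Define X_{k+1} := A X_k Aᵀ + α² W_k for k ≥ 0. Then for every k ≥ 0, λ_max(X_k) ≤ α² W_max · Σ_{i=0}^{k−1} ‖A^i‖₂² + λ_max(X₀) · ‖A^k‖₂². -/
/-!
The quadratic form of `X (k + 1)` at `v` is that of `X k` at `Aᵀ v` plus `α²` times that of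
`W k` at `v`. Unrolling, `vᵀ X_k v ≤ α² W_max Σ_{i<k} ‖(Aᵀ)^i v‖² + λ_max(X₀) ‖(Aᵀ)^k v‖²`, and
for a unit vector `v` we have `‖(Aᵀ)^i v‖ ≤ ‖(A^i)ᵀ‖₂ = ‖A^i‖₂`. Taking the supremum over unit
vectors `v` gives the bound.
-/

open Matrix

/-- The largest eigenvalue of a symmetric real matrix `M`, expressed as the supremum of
the quadratic form `vᵀ M v` over unit Euclidean vectors `v`. -/
noncomputable def lamMax {n : ℕ} (M : Matrix (Fin n) (Fin n) ℝ) : ℝ :=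
  sSup {x : ℝ | ∃ v : Fin n → ℝ, (∑ i, v i ^ 2 = 1) ∧ x = v ⬝ᵥ M.mulVec v}

/-- The spectral norm of a square real matrix (the operator norm induced by the
Euclidean vector norm). -/
noncomputable def specNorm {n : ℕ} (M : Matrix (Fin n) (Fin n) ℝ) : ℝ :=
  ‖Matrix.toEuclideanCLM (𝕜 := ℝ) M‖

open scoped Matrix.Norms.L2Operator

section
variable {n : ℕ}

theorem specNorm_eq_l2_opNorm (M : Matrix (Fin n) (Fin n) ℝ) : specNorm M = ‖M‖ := rfl

theorem specNorm_transpose (M : Matrix (Fin n) (Fin n) ℝ) : specNorm Mᵀ = specNorm M := by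
  simp only [specNorm_eq_l2_opNorm, ← conjTranspose_eq_transpose_of_trivial,
    l2_opNorm_conjTranspose]

theorem sum_sq_eq_norm_toLp_sq (v : Fin n → ℝ) : ∑ i, v i ^ 2 = ‖WithLp.toLp 2 v‖ ^ 2 :=
  (EuclideanSpace.real_norm_sq_eq _).symm

theorem sum_sq_mulVec_le (M : Matrix (Fin n) (Fin n) ℝ) (v : Fin n → ℝ) :
    ∑ i, (M *ᵥ v) i ^ 2 ≤ specNorm M ^ 2 * ∑ i, v i ^ 2 := by
  simp only [sum_sq_eq_norm_toLp_sq, specNorm_eq_l2_opNorm, ← mul_pow]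
  gcongr
  exact M.l2_opNorm_mulVec (WithLp.toLp 2 v)

theorem dotProduct_mulVec_le_specNorm_mul (M : Matrix (Fin n) (Fin n) ℝ) (v : Fin n → ℝ) :
    v ⬝ᵥ M *ᵥ v ≤ specNorm M * ∑ i, v i ^ 2 := by
  have hinner : v ⬝ᵥ M *ᵥ v = inner ℝ (WithLp.toLp 2 v) (WithLp.toLp 2 (M *ᵥ v)) := by
    simp [EuclideanSpace.inner_toLp_toLp, dotProduct_comm]
  calc v ⬝ᵥ M *ᵥ v ≤ ‖WithLp.toLp 2 v‖ * ‖WithLp.toLp 2 (M *ᵥ v)‖ :=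
        hinner ▸ real_inner_le_norm _ _
    _ ≤ ‖WithLp.toLp 2 v‖ * (‖M‖ * ‖WithLp.toLp 2 v‖) := by
        gcongr; exact M.l2_opNorm_mulVec (WithLp.toLp 2 v)
    _ = specNorm M * ∑ i, v i ^ 2 := by rw [sum_sq_eq_norm_toLp_sq, specNorm_eq_l2_opNorm]; ring

theorem bddAbove_dotProduct_mulVec_unit (M : Matrix (Fin n) (Fin n) ℝ) :
    BddAbove {x : ℝ | ∃ v : Fin n → ℝ, (∑ i, v i ^ 2 = 1) ∧ x = v ⬝ᵥ M *ᵥ v} := by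
  refine ⟨specNorm M, ?_⟩
  rintro _ ⟨v, hv, rfl⟩
  simpa [hv] using dotProduct_mulVec_le_specNorm_mul M v

theorem dotProduct_mulVec_le_lamMax {M : Matrix (Fin n) (Fin n) ℝ} {v : Fin n → ℝ}
    (hv : ∑ i, v i ^ 2 = 1) : v ⬝ᵥ M *ᵥ v ≤ lamMax M :=
  le_csSup (bddAbove_dotProduct_mulVec_unit M) ⟨v, hv, rfl⟩

theorem dotProduct_mulVec_le_lamMax_mul (M : Matrix (Fin n) (Fin n) ℝ) (v : Fin n → ℝ) :
    v ⬝ᵥ M *ᵥ v ≤ lamMax M * ∑ i, v i ^ 2 := by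
  set s := ∑ i, v i ^ 2 with hs_def
  obtain hs | hs := (show 0 ≤ s by positivity).eq_or_lt
  · have hv : v = 0 := by simpa [hs_def, sum_sq_eq_norm_toLp_sq] using hs.symm
    simp [hv, ← hs]
  · set c := (√s)⁻¹
    have hc : c ^ 2 = s⁻¹ := by rw [inv_pow, Real.sq_sqrt hs.le]
    have hunit : ∑ i, (c • v) i ^ 2 = 1 := by
      simp only [Pi.smul_apply, smul_eq_mul, mul_pow, ← Finset.mul_sum, hc, ← hs_def]
      exact inv_mul_cancel₀ hs.ne'
    have hle := dotProduct_mulVec_le_lamMax (M := M) hunit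
    rw [mulVec_smul, dotProduct_smul, smul_dotProduct, smul_eq_mul, smul_eq_mul, ← mul_assoc,
      ← sq, hc, inv_mul_le_iff₀ hs] at hle
    linarith

-- `0 ≤ c` covers `n = 0`, where there are no unit vectors and `lamMax M = sSup ∅ = 0`.
theorem lamMax_le {M : Matrix (Fin n) (Fin n) ℝ} {c : ℝ} (hc : 0 ≤ c)
    (h : ∀ v : Fin n → ℝ, ∑ i, v i ^ 2 = 1 → v ⬝ᵥ M *ᵥ v ≤ c) : lamMax M ≤ c :=
  Real.sSup_le (by rintro _ ⟨v, hv, rfl⟩; exact h v hv) hc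

theorem Matrix.PosSemidef.lamMax_nonneg {M : Matrix (Fin n) (Fin n) ℝ} (hM : M.PosSemidef) :
    0 ≤ lamMax M :=
  Real.sSup_nonneg <| by rintro _ ⟨v, -, rfl⟩; simpa using hM.dotProduct_mulVec_nonneg v

theorem dotProduct_mulVec_mul_mul_transpose (A M : Matrix (Fin n) (Fin n) ℝ) (v : Fin n → ℝ) :
    v ⬝ᵥ (A * M * Aᵀ) *ᵥ v = (Aᵀ *ᵥ v) ⬝ᵥ M *ᵥ (Aᵀ *ᵥ v) := by
  rw [← mulVec_mulVec, ← mulVec_mulVec, dotProduct_mulVec, ← mulVec_transpose]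

theorem dotProduct_mulVec_le_of_recursion (A : Matrix (Fin n) (Fin n) ℝ) (α Wmax : ℝ)
    {W X : ℕ → Matrix (Fin n) (Fin n) ℝ} (hW : ∀ j, lamMax (W j) ≤ Wmax)
    (hXrec : ∀ k, X (k + 1) = A * X k * Aᵀ + (α ^ 2) • W k) (k : ℕ) (v : Fin n → ℝ) :
    v ⬝ᵥ X k *ᵥ v ≤
      α ^ 2 * Wmax * ∑ i ∈ Finset.range k, ∑ j, ((Aᵀ ^ i) *ᵥ v) j ^ 2 +
        lamMax (X 0) * ∑ j, ((Aᵀ ^ k) *ᵥ v) j ^ 2 := by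
  induction k generalizing v with
  | zero => simpa using dotProduct_mulVec_le_lamMax_mul (X 0) v
  | succ k ih =>
    have hshift (i : ℕ) : (Aᵀ ^ i) *ᵥ (Aᵀ *ᵥ v) = (Aᵀ ^ (i + 1)) *ᵥ v := by
      rw [mulVec_mulVec, ← pow_succ]
    have hX := ih (Aᵀ *ᵥ v)
    simp only [hshift] at hX
    have hWk : v ⬝ᵥ W k *ᵥ v ≤ Wmax * ∑ j, v j ^ 2 :=
      (dotProduct_mulVec_le_lamMax_mul _ v).trans (by gcongr; exact hW k)
    rw [hXrec, add_mulVec, dotProduct_add, dotProduct_mulVec_mul_mul_transpose, smul_mulVec,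
      dotProduct_smul, smul_eq_mul, Finset.sum_range_succ']
    simp only [pow_zero, one_mulVec]
    linarith [mul_le_mul_of_nonneg_left hWk (sq_nonneg α)]

end

theorem lamMax_autocorrelation_recursion_bound_general
    (n : ℕ) (A : Matrix (Fin n) (Fin n) ℝ)
    (X₀ : Matrix (Fin n) (Fin n) ℝ) (hX₀ : X₀.PosSemidef)
    (α : ℝ)
    (Wmax : ℝ) (hWmax : 0 ≤ Wmax)
    (W : ℕ → Matrix (Fin n) (Fin n) ℝ)
    (hW : ∀ j, lamMax (W j) ≤ Wmax)
    (X : ℕ → Matrix (Fin n) (Fin n) ℝ)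
    (hX0 : X 0 = X₀)
    (hXrec : ∀ k, X (k + 1) = A * X k * Aᵀ + (α ^ 2) • W k) :
    ∀ k, lamMax (X k) ≤
      α ^ 2 * Wmax * (∑ i ∈ Finset.range k, specNorm (A ^ i) ^ 2) +
        lamMax X₀ * specNorm (A ^ k) ^ 2 := by
  intro k
  have hnorm (i : ℕ) {v : Fin n → ℝ} (hv : ∑ j, v j ^ 2 = 1) :
      ∑ j, ((Aᵀ ^ i) *ᵥ v) j ^ 2 ≤ specNorm (A ^ i) ^ 2 := by
    simpa [hv, ← transpose_pow, specNorm_transpose] using sum_sq_mulVec_le (Aᵀ ^ i) v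
  have hX₀_nonneg := hX₀.lamMax_nonneg
  refine lamMax_le (by positivity) fun v hv => ?_
  calc v ⬝ᵥ X k *ᵥ v
      ≤ α ^ 2 * Wmax * ∑ i ∈ Finset.range k, ∑ j, ((Aᵀ ^ i) *ᵥ v) j ^ 2 +
          lamMax X₀ * ∑ j, ((Aᵀ ^ k) *ᵥ v) j ^ 2 :=
        hX0 ▸ dotProduct_mulVec_le_of_recursion A α Wmax hW hXrec k v
    _ ≤ _ := by gcongr with i <;> exact hnorm _ hv

/-- For the recursion `X_{k+1} = A X_k Aᵀ + α² W_k` with `X₀` symmetric PSD,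
`α ≥ 0` and symmetric PSD matrices `W_j` with `λ_max(W_j) ≤ W_max`, for every `k`:
`λ_max(X_k) ≤ α² W_max Σ_{i=0}^{k-1} ‖A^i‖₂² + λ_max(X₀) ‖A^k‖₂²`. -/
theorem lamMax_autocorrelation_recursion_bound
    (n : ℕ) (A : Matrix (Fin n) (Fin n) ℝ)
    (X₀ : Matrix (Fin n) (Fin n) ℝ) (hX₀ : X₀.PosSemidef)
    (α : ℝ) (hα : 0 ≤ α)
    (Wmax : ℝ) (hWmax : 0 ≤ Wmax)
    (W : ℕ → Matrix (Fin n) (Fin n) ℝ)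
    (hWpsd : ∀ j, (W j).PosSemidef)
    (hW : ∀ j, lamMax (W j) ≤ Wmax)
    (X : ℕ → Matrix (Fin n) (Fin n) ℝ)
    (hX0 : X 0 = X₀)
    (hXrec : ∀ k, X (k + 1) = A * X k * Aᵀ + (α ^ 2) • W k) :
    ∀ k, lamMax (X k) ≤
      α ^ 2 * Wmax * (∑ i ∈ Finset.range k, specNorm (A ^ i) ^ 2) +
        lamMax X₀ * specNorm (A ^ k) ^ 2 :=
  lamMax_autocorrelation_recursion_bound_general n A X₀ hX₀ α Wmax hWmax W hW X hX0 hXrec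
end

section
/- Let n ≥ 1, let ρ := 1 − α d_min(1−γ), and let A be an n×n real matrix with ‖A‖_∞ ≤ ρ. Let (Ω, μ) be a probability space, x₀ ∈ ℝⁿ a fixed vector, and (x_k)_{k≥0}, (w_k)_{k≥0} sequences of square-integrable random vectors in ℝⁿ such that x_0 equals the fixed vector x₀ almost surely, x_{k+1} = A x_k + α w_k almost surely for all k, E[x_k(i)·w_k(j)] = 0 for all indices i, j and all k, and E[‖w_k‖₂²] ≤ 9/(1−γ)² for all k. Then for every k ≥ 0, E[‖x_k‖₂] ≤ 3 α^{1/2} n / (d_min^{1/2} (1−γ)^{3/2}) + n ‖x₀‖₂ ρ^k. -/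
/-!
Write `m_k(i) = E[x_k(i)²]`. Since the noise is orthogonal to the state, the cross term in
`E[((A x_k)(i) + α w_k(i))²]` vanishes, and Cauchy–Schwarz bounds the rest, so
`m_{k+1}(i) ≤ (∑ⱼ |A i j| √m_k(j))² + α² E[w_k(i)²]`. With row sums at most `ρ`, induction gives
`m_k(i) ≤ ρ^{2k} ‖x₀‖² + C` for any `C` with `ρ² C + α² W ≤ C`, where `W = 9/(1-γ)²`; the choice
`C = 9α/(d_min (1-γ)³)` works because `α² W = (1 - ρ) C`. Finally Jensen's inequality gives
`E‖x_k‖ ≤ √(∑ᵢ m_k(i)) ≤ √n (ρ^k ‖x₀‖ + √C)`.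
-/

open MeasureTheory Matrix

lemma Real.sqrt_add_le_sqrt_add_sqrt (a b : ℝ) : √(a + b) ≤ √a + √b := by
  rw [Real.sqrt_le_left (by positivity)]
  nlinarith [Real.sq_sqrt' (x := a), le_max_left a 0, Real.sq_sqrt' (x := b), le_max_left b 0,
    mul_nonneg (Real.sqrt_nonneg a) (Real.sqrt_nonneg b)]

lemma Real.sqrt_nine_mul_div_mul_pow_three {a c : ℝ} (b : ℝ) (ha : 0 ≤ a) (hc : 0 ≤ c) :
    √(9 * a / (b * c ^ 3)) = 3 * √a / (√b * c ^ ((3 : ℝ) / 2)) := by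
  rw [Real.sqrt_div (by positivity), Real.sqrt_mul' 9 ha, Real.sqrt_mul' b (pow_nonneg hc 3),
    show (9 : ℝ) = 3 ^ 2 by norm_num, Real.sqrt_sq (by norm_num), Real.sqrt_eq_rpow (c ^ 3),
    ← Real.rpow_natCast, ← Real.rpow_mul hc]
  norm_num

lemma Real.sqrt_natCast_le (n : ℕ) : √(n : ℝ) ≤ n := by
  rcases n.eq_zero_or_pos with rfl | hn
  · simp
  · exact Real.sqrt_le_self_iff.2 (Or.inr (by exact_mod_cast hn))

section SecondMoments

variable {Ω : Type*} [MeasurableSpace Ω] {μ : Measure Ω} {f g : Ω → ℝ}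

lemma abs_integral_mul_le_sqrt_mul_sqrt (hf : MemLp f 2 μ) (hg : MemLp g 2 μ) :
    |∫ ω, f ω * g ω ∂μ| ≤ √(∫ ω, f ω ^ 2 ∂μ) * √(∫ ω, g ω ^ 2 ∂μ) := by
  have hpq : Real.HolderConjugate 2 2 := by rw [Real.holderConjugate_iff]; norm_num
  have holder := integral_mul_norm_le_Lp_mul_Lq hpq (by simpa using hf) (by simpa using hg)
  simp only [Real.norm_eq_abs, Real.rpow_two, sq_abs, ← Real.sqrt_eq_rpow] at holder
  refine abs_integral_le_integral_abs.trans ?_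
  simpa only [abs_mul] using holder

lemma integral_add_sq_of_integral_mul_eq_zero (hf : MemLp f 2 μ) (hg : MemLp g 2 μ)
    (horth : ∫ ω, f ω * g ω ∂μ = 0) :
    ∫ ω, (f ω + g ω) ^ 2 ∂μ = ∫ ω, f ω ^ 2 ∂μ + ∫ ω, g ω ^ 2 ∂μ := by
  have hexpand : ∀ ω, (f ω + g ω) ^ 2 = f ω ^ 2 + g ω ^ 2 + 2 * (f ω * g ω) := fun ω => by ring
  have hsq : Integrable (fun ω => f ω ^ 2 + g ω ^ 2) μ := hf.integrable_sq.add hg.integrable_sq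
  have hfg : Integrable (fun ω => 2 * (f ω * g ω)) μ := (hf.integrable_mul hg).const_mul 2
  simp_rw [hexpand]
  rw [integral_add hsq hfg, integral_add hf.integrable_sq hg.integrable_sq, integral_const_mul,
    horth, mul_zero, add_zero]

lemma integral_sum_mul_sq_le {ι : Type*} (s : Finset ι) (a : ι → ℝ) {f : ι → Ω → ℝ}
    (hf : ∀ j ∈ s, MemLp (f j) 2 μ) :
    ∫ ω, (∑ j ∈ s, a j * f j ω) ^ 2 ∂μ ≤ (∑ j ∈ s, |a j| * √(∫ ω, f j ω ^ 2 ∂μ)) ^ 2 := by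
  have hint : ∀ j ∈ s, ∀ l ∈ s, Integrable (fun ω => a j * a l * (f j ω * f l ω)) μ :=
    fun j hj l hl => ((hf j hj).integrable_mul (hf l hl)).const_mul _
  calc ∫ ω, (∑ j ∈ s, a j * f j ω) ^ 2 ∂μ
      = ∑ j ∈ s, ∑ l ∈ s, a j * a l * ∫ ω, f j ω * f l ω ∂μ := by
        simp_rw [sq, Finset.sum_mul_sum, mul_mul_mul_comm]
        rw [integral_finsetSum _ fun j hj => integrable_finsetSum _ (hint j hj)]
        refine Finset.sum_congr rfl fun j hj => ?_
        rw [integral_finsetSum _ (hint j hj)]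
        simp_rw [integral_const_mul]
    _ ≤ ∑ j ∈ s, ∑ l ∈ s, |a j| * √(∫ ω, f j ω ^ 2 ∂μ) * (|a l| * √(∫ ω, f l ω ^ 2 ∂μ)) := by
        refine Finset.sum_le_sum fun j hj => Finset.sum_le_sum fun l hl => ?_
        calc a j * a l * ∫ ω, f j ω * f l ω ∂μ
            ≤ |a j| * |a l| * |∫ ω, f j ω * f l ω ∂μ| := by
              rw [← abs_mul, ← abs_mul]; exact le_abs_self _
          _ ≤ |a j| * |a l| * (√(∫ ω, f j ω ^ 2 ∂μ) * √(∫ ω, f l ω ^ 2 ∂μ)) := by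
              gcongr; exact abs_integral_mul_le_sqrt_mul_sqrt (hf j hj) (hf l hl)
          _ = _ := by ring
    _ = _ := by rw [sq, Finset.sum_mul_sum]

lemma integral_sqrt_le_sqrt_integral [IsProbabilityMeasure μ] (hf : Integrable f μ)
    (hf0 : 0 ≤ f) : ∫ ω, √(f ω) ∂μ ≤ √(∫ ω, f ω ∂μ) := by
  have hsq : ∀ ω, √(f ω) ^ 2 = f ω := fun ω => Real.sq_sqrt (hf0 ω)
  have hL2 : MemLp (fun ω => √(f ω)) 2 μ := by
    rw [memLp_two_iff_integrable_sq
      (Real.continuous_sqrt.comp_aestronglyMeasurable hf.aestronglyMeasurable)]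
    simpa only [hsq] using hf
  have hcs := abs_integral_mul_le_sqrt_mul_sqrt hL2 (memLp_const (1 : ℝ))
  simp only [mul_one, one_pow, hsq, integral_const, probReal_univ, smul_eq_mul,
    Real.sqrt_one] at hcs
  exact (le_abs_self _).trans hcs

end SecondMoments

section ComparisonSystem

variable {Ω : Type*} [MeasurableSpace Ω] {μ : Measure Ω} {ι : Type*} [Fintype ι]

lemma integral_sq_mulVec_add_smul_le {m : Type*} (A : Matrix m ι ℝ) (α : ℝ) {u : Ω → ι → ℝ}
    {v : Ω → m → ℝ} (i : m) (hu : ∀ j, MemLp (fun ω => u ω j) 2 μ)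
    (hv : MemLp (fun ω => v ω i) 2 μ) (horth : ∀ j, ∫ ω, u ω j * v ω i ∂μ = 0) :
    ∫ ω, (A *ᵥ u ω + α • v ω) i ^ 2 ∂μ ≤
      (∑ j, |A i j| * √(∫ ω, u ω j ^ 2 ∂μ)) ^ 2 + α ^ 2 * ∫ ω, v ω i ^ 2 ∂μ := by
  have hAu : MemLp (fun ω => ∑ j, A i j * u ω j) 2 μ :=
    memLp_finsetSum _ fun j _ => (hu j).const_mul (A i j)
  have hcross : ∫ ω, (∑ j, A i j * u ω j) * (α * v ω i) ∂μ = 0 := by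
    have hint : ∀ j, Integrable (fun ω => A i j * α * (u ω j * v ω i)) μ :=
      fun j => ((hu j).integrable_mul hv).const_mul _
    simp_rw [Finset.sum_mul, mul_mul_mul_comm]
    simp [integral_finsetSum _ fun j _ => hint j, integral_const_mul, horth]
  simp only [Pi.add_apply, mulVec, dotProduct, Pi.smul_apply, smul_eq_mul]
  rw [integral_add_sq_of_integral_mul_eq_zero hAu (hv.const_mul α) hcross]
  simp_rw [mul_pow, integral_const_mul]
  gcongr
  exact integral_sum_mul_sq_le _ _ fun j _ => hu j

lemma integral_sq_apply_le_integral_sum_sq {f : Ω → ι → ℝ}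
    (hf : ∀ j, MemLp (fun ω => f ω j) 2 μ) (i : ι) : ∫ ω, f ω i ^ 2 ∂μ ≤ ∫ ω, ∑ j, f ω j ^ 2 ∂μ :=
  integral_mono (hf i).integrable_sq (integrable_finsetSum _ fun j _ => (hf j).integrable_sq)
    fun ω => Finset.single_le_sum (fun j _ => sq_nonneg (f ω j)) (Finset.mem_univ i)

lemma integral_sq_le_of_mulVec_add_smul (A : Matrix ι ι ℝ) {α ρ B C W : ℝ}
    {x w : ℕ → Ω → ι → ℝ} (hrow : ∀ i, ∑ j, |A i j| ≤ ρ) (hC0 : 0 ≤ C)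
    (hC : ρ ^ 2 * C + α ^ 2 * W ≤ C)
    (hxL2 : ∀ k i, MemLp (fun ω => x k ω i) 2 μ) (hwL2 : ∀ k i, MemLp (fun ω => w k ω i) 2 μ)
    (hx0 : ∀ i, ∫ ω, x 0 ω i ^ 2 ∂μ ≤ B)
    (hrec : ∀ k, ∀ᵐ ω ∂μ, x (k + 1) ω = A *ᵥ x k ω + α • w k ω)
    (horth : ∀ k i j, ∫ ω, x k ω i * w k ω j ∂μ = 0)
    (hw : ∀ k i, ∫ ω, w k ω i ^ 2 ∂μ ≤ W) (k : ℕ) (i : ι) :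
    ∫ ω, x k ω i ^ 2 ∂μ ≤ (ρ ^ k) ^ 2 * B + C := by
  induction k generalizing i with
  | zero => simpa using (hx0 i).trans (le_add_of_nonneg_right hC0)
  | succ k ih =>
    set M := (ρ ^ k) ^ 2 * B + C
    have hM : 0 ≤ M := (integral_nonneg fun ω => sq_nonneg (x k ω i)).trans (ih i)
    have hrowM : ∑ j, |A i j| * √(∫ ω, x k ω j ^ 2 ∂μ) ≤ ρ * √M :=
      calc ∑ j, |A i j| * √(∫ ω, x k ω j ^ 2 ∂μ) ≤ ∑ j, |A i j| * √M := by
            gcongr with j; exact ih j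
        _ = (∑ j, |A i j|) * √M := Finset.sum_mul .. |>.symm
        _ ≤ ρ * √M := by gcongr; exact hrow i
    calc ∫ ω, x (k + 1) ω i ^ 2 ∂μ = ∫ ω, (A *ᵥ x k ω + α • w k ω) i ^ 2 ∂μ :=
          integral_congr_ae ((hrec k).mono fun ω hω => by simp only [hω])
      _ ≤ (ρ * √M) ^ 2 + α ^ 2 * W := by
          grw [integral_sq_mulVec_add_smul_le A α i (hxL2 k) (hwL2 k i) (fun j => horth k j i),
            hrowM, hw k i]
      _ = ρ ^ 2 * ((ρ ^ k) ^ 2 * B) + (ρ ^ 2 * C + α ^ 2 * W) := by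
          rw [mul_pow, Real.sq_sqrt hM]; ring
      _ ≤ (ρ ^ (k + 1)) ^ 2 * B + C := by
          linarith [show (ρ ^ (k + 1)) ^ 2 * B = ρ ^ 2 * ((ρ ^ k) ^ 2 * B) by ring]

lemma integral_sqrt_sum_sq_le [IsProbabilityMeasure μ] {f : Ω → ι → ℝ} {M : ℝ}
    (hf : ∀ i, MemLp (fun ω => f ω i) 2 μ) (hM : ∀ i, ∫ ω, f ω i ^ 2 ∂μ ≤ M) :
    ∫ ω, √(∑ i, f ω i ^ 2) ∂μ ≤ √(Fintype.card ι * M) := by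
  have hint : ∀ i ∈ Finset.univ, Integrable (fun ω => f ω i ^ 2) μ :=
    fun i _ => (hf i).integrable_sq
  refine (integral_sqrt_le_sqrt_integral (integrable_finsetSum _ hint)
    fun ω => Finset.sum_nonneg fun i _ => sq_nonneg (f ω i)).trans ?_
  rw [integral_finsetSum _ hint]
  gcongr
  simpa using Finset.sum_le_sum fun i (_ : i ∈ Finset.univ) => hM i

end ComparisonSystem

theorem lower_comparison_system_finite_time_bound_general
    (n : ℕ)
    (α γ dmin : ℝ) (hα : 0 < α ∧ α < 1) (hγ : 0 ≤ γ ∧ γ < 1) (hd : 0 < dmin ∧ dmin ≤ 1)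
    {Ω : Type*} [MeasurableSpace Ω] (μ : Measure Ω) [IsProbabilityMeasure μ]
    (A : Matrix (Fin n) (Fin n) ℝ)
    (hA : (⨆ i, ∑ j, |A i j|) ≤ 1 - α * dmin * (1 - γ))
    (x₀ : Fin n → ℝ)
    (x w : ℕ → Ω → Fin n → ℝ)
    (hxL2 : ∀ k i, MemLp (fun ω => x k ω i) 2 μ)
    (hwL2 : ∀ k i, MemLp (fun ω => w k ω i) 2 μ)
    (hx0 : ∀ᵐ ω ∂μ, x 0 ω = x₀)
    (hrec : ∀ k, ∀ᵐ ω ∂μ, x (k + 1) ω = A.mulVec (x k ω) + α • w k ω)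
    (horth : ∀ k i j, ∫ ω, x k ω i * w k ω j ∂μ = 0)
    (hwbound : ∀ k, ∫ ω, ∑ i, (w k ω i) ^ 2 ∂μ ≤ 9 / (1 - γ) ^ 2) :
    ∀ k, ∫ ω, Real.sqrt (∑ i, (x k ω i) ^ 2) ∂μ ≤
      3 * Real.sqrt α * n / (Real.sqrt dmin * (1 - γ) ^ ((3 : ℝ) / 2)) +
        n * Real.sqrt (∑ i, x₀ i ^ 2) * (1 - α * dmin * (1 - γ)) ^ k := by
  obtain ⟨hα0, hα1⟩ := hα
  obtain ⟨hγ0, hγ1⟩ := hγ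
  obtain ⟨hd0, hd1⟩ := hd
  set ρ := 1 - α * dmin * (1 - γ)
  set B := ∑ i, x₀ i ^ 2
  set C := 9 * α / (dmin * (1 - γ) ^ 3)
  have hρ0 : 0 ≤ ρ := sub_nonneg.2 <|
    mul_le_one₀ (mul_le_one₀ hα1.le hd0.le hd1) (by linarith) (by linarith)
  have h1γ : 0 < 1 - γ := by linarith
  have hρ1 : ρ ≤ 1 := sub_le_self _ (by positivity)
  have hnoise : α ^ 2 * (9 / (1 - γ) ^ 2) = (1 - ρ) * C := by
    simp only [ρ, C]
    field_simp
    ring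
  have hC : ρ ^ 2 * C + α ^ 2 * (9 / (1 - γ) ^ 2) ≤ C := by
    rw [hnoise]
    nlinarith [mul_nonneg (mul_nonneg hρ0 (sub_nonneg.2 hρ1)) (by positivity : 0 ≤ C)]
  have hrow : ∀ i, ∑ j, |A i j| ≤ ρ := fun i =>
    (le_ciSup (Set.finite_range _).bddAbove i).trans hA
  have hx0_sq : ∀ i, ∫ ω, x 0 ω i ^ 2 ∂μ ≤ B := fun i => by
    rw [integral_congr_ae (g := fun _ => x₀ i ^ 2) (hx0.mono fun ω hω => by simp only [hω]),
      integral_const]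
    simpa using Finset.single_le_sum (fun j _ => sq_nonneg (x₀ j)) (Finset.mem_univ i)
  have hw : ∀ k i, ∫ ω, w k ω i ^ 2 ∂μ ≤ 9 / (1 - γ) ^ 2 := fun k i =>
    (integral_sq_apply_le_integral_sum_sq (hwL2 k) i).trans (hwbound k)
  intro k
  calc ∫ ω, √(∑ i, x k ω i ^ 2) ∂μ ≤ √(n * ((ρ ^ k) ^ 2 * B + C)) := by
        simpa using integral_sqrt_sum_sq_le (hxL2 k) (integral_sq_le_of_mulVec_add_smul A
          hrow (by positivity) hC hxL2 hwL2 hx0_sq hrec horth hw k)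
    _ ≤ √n * (ρ ^ k * √B + √C) := by
        rw [Real.sqrt_mul n.cast_nonneg]
        grw [Real.sqrt_add_le_sqrt_add_sqrt, Real.sqrt_mul' _ (by positivity),
          Real.sqrt_sq (by positivity)]
    _ ≤ n * (ρ ^ k * √B + √C) := by grw [Real.sqrt_natCast_le]
    _ = _ := by rw [Real.sqrt_nine_mul_div_mul_pow_three _ hα0.le h1γ.le]; ring

/-- Finite-time bound for the lower comparison system. If `‖A‖_∞ ≤ ρ :=
1 − α d_min(1−γ)`, `x_0 = x₀` a.s., `x_{k+1} = A x_k + α w_k` a.s., the noise is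
uncorrelated with the state (`E[x_k(i) w_k(j)] = 0`) and `E[‖w_k‖₂²] ≤ 9/(1−γ)²`, then
`E[‖x_k‖₂] ≤ 3 α^{1/2} n / (d_min^{1/2} (1−γ)^{3/2}) + n ‖x₀‖₂ ρ^k` for all `k`. -/
theorem lower_comparison_system_finite_time_bound
    (n : ℕ) (hn : 1 ≤ n)
    (α γ dmin : ℝ) (hα : 0 < α ∧ α < 1) (hγ : 0 ≤ γ ∧ γ < 1) (hd : 0 < dmin ∧ dmin ≤ 1)
    {Ω : Type*} [MeasurableSpace Ω] (μ : Measure Ω) [IsProbabilityMeasure μ]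
    (A : Matrix (Fin n) (Fin n) ℝ)
    (hA : (⨆ i, ∑ j, |A i j|) ≤ 1 - α * dmin * (1 - γ))
    (x₀ : Fin n → ℝ)
    (x w : ℕ → Ω → Fin n → ℝ)
    (hxL2 : ∀ k i, MemLp (fun ω => x k ω i) 2 μ)
    (hwL2 : ∀ k i, MemLp (fun ω => w k ω i) 2 μ)
    (hx0 : ∀ᵐ ω ∂μ, x 0 ω = x₀)
    (hrec : ∀ k, ∀ᵐ ω ∂μ, x (k + 1) ω = A.mulVec (x k ω) + α • w k ω)
    (horth : ∀ k i j, ∫ ω, x k ω i * w k ω j ∂μ = 0)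
    (hwbound : ∀ k, ∫ ω, ∑ i, (w k ω i) ^ 2 ∂μ ≤ 9 / (1 - γ) ^ 2) :
    ∀ k, ∫ ω, Real.sqrt (∑ i, (x k ω i) ^ 2) ∂μ ≤
      3 * Real.sqrt α * n / (Real.sqrt dmin * (1 - γ) ^ ((3 : ℝ) / 2)) +
        n * Real.sqrt (∑ i, x₀ i ^ 2) * (1 - α * dmin * (1 - γ)) ^ k :=
  lower_comparison_system_finite_time_bound_general n α γ dmin hα hγ hd μ A hA x₀ x w hxL2 hwL2 hx0
    hrec horth hwbound
end

section
/- Let ρ := 1 − α d_min(1−γ) and set L₁ := 3 α^{1/2} n / (d_min^{1/2}(1−γ)^{3/2}) and L₂ := 2 n^{3/2}/(1−γ). Suppose nonnegative real sequences (e_k)_{k≥0}, (l_k)_{k≥0}, (u_k)_{k≥0} satisfy for all k ≥ 0: e_k ≤ l_k + u_k, l_k ≤ L₁ + L₂ ρ^k, u_0 = 0, and u_{k+1} ≤ ρ u_k + 2αγ d_max l_k. Then for every k ≥ 0, e_k ≤ 9 d_max n α^{1/2} / (d_min^{3/2}(1−γ)^{5/2}) + (2 n^{3/2}/(1−γ))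 ρ^k + (4 α γ d_max n^{3/2}/(1−γ)) · k · ρ^{k−1}. -/
set_option maxHeartbeats 1000000


/-- The deterministic core of the final-iterate error bound. With
`ρ := 1 − α d_min(1−γ)`, `L₁ := 3 α^{1/2} n / (d_min^{1/2}(1−γ)^{3/2})` and
`L₂ := 2 n^{3/2}/(1−γ)`, if the nonnegative sequences `(e_k)`, `(l_k)`, `(u_k)` satisfy
`e_k ≤ l_k + u_k`, `l_k ≤ L₁ + L₂ ρ^k`, `u_0 = 0` and `u_{k+1} ≤ ρ u_k + 2αγ d_max l_k`,
then `e_k ≤ 9 d_max n α^{1/2}/(d_min^{3/2}(1−γ)^{5/2}) + (2 n^{3/2}/(1−γ)) ρ^k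
+ (4αγ d_max n^{3/2}/(1−γ)) k ρ^{k−1}` for every `k`
(for `k = 0` the term `k ρ^{k−1}` is interpreted as `0`). -/
theorem final_iterate_error_bound_core
    (α γ n dmin dmax : ℝ)
    (hα : 0 < α ∧ α < 1) (hγ : 0 ≤ γ ∧ γ < 1) (hn : 1 ≤ n)
    (hdmin : 0 < dmin) (hdd : dmin ≤ dmax) (hdmax : dmax ≤ 1)
    (e l u : ℕ → ℝ)
    (he0 : ∀ k, 0 ≤ e k) (hl0 : ∀ k, 0 ≤ l k) (hu0 : ∀ k, 0 ≤ u k)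
    (helu : ∀ k, e k ≤ l k + u k)
    (hl : ∀ k, l k ≤ 3 * Real.sqrt α * n / (Real.sqrt dmin * (1 - γ) ^ ((3 : ℝ) / 2)) +
      (2 * n ^ ((3 : ℝ) / 2) / (1 - γ)) * (1 - α * dmin * (1 - γ)) ^ k)
    (hu0eq : u 0 = 0)
    (hu : ∀ k, u (k + 1) ≤ (1 - α * dmin * (1 - γ)) * u k + 2 * α * γ * dmax * l k) :
    ∀ k, e k ≤
      9 * dmax * n * Real.sqrt α / (dmin ^ ((3 : ℝ) / 2) * (1 - γ) ^ ((5 : ℝ) / 2)) +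
        (2 * n ^ ((3 : ℝ) / 2) / (1 - γ)) * (1 - α * dmin * (1 - γ)) ^ k +
        (4 * α * γ * dmax * n ^ ((3 : ℝ) / 2) / (1 - γ)) * k *
          (1 - α * dmin * (1 - γ)) ^ (k - 1) := by
  obtain ⟨hα0, hα1⟩ := hα
  obtain ⟨hγ0, hγ1⟩ := hγ
  have h1γ : (0:ℝ) < 1 - γ := by linarith
  have hdmax0 : (0:ℝ) < dmax := lt_of_lt_of_le hdmin hdd
  have hn0 : (0:ℝ) < n := by linarith
  have hsα : 0 < Real.sqrt α := Real.sqrt_pos.2 hα0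
  have hsd : 0 < Real.sqrt dmin := Real.sqrt_pos.2 hdmin
  have hP : 0 < (1 - γ) ^ ((3:ℝ)/2) := Real.rpow_pos_of_pos h1γ _
  have hN : 0 < n ^ ((3:ℝ)/2) := Real.rpow_pos_of_pos hn0 _
  set ρ := 1 - α * dmin * (1 - γ) with hρdef
  have hd1 : dmin ≤ 1 := hdd.trans hdmax
  have hA1 : α * dmin * (1 - γ) < 1 := by
    have h1 : dmin * (1 - γ) ≤ 1 := by nlinarith
    calc α * dmin * (1 - γ) = α * (dmin * (1 - γ)) := by ring
      _ ≤ α * 1 := mul_le_mul_of_nonneg_left h1 hα0.le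
      _ < 1 := by linarith
  have hρ0 : 0 < ρ := by rw [hρdef]; linarith
  set L1 := 3 * Real.sqrt α * n / (Real.sqrt dmin * (1 - γ) ^ ((3:ℝ)/2)) with hL1def
  set L2 := 2 * n ^ ((3:ℝ)/2) / (1 - γ) with hL2def
  have hL1pos : 0 < L1 := by rw [hL1def]; positivity
  have hL2pos : 0 < L2 := by rw [hL2def]; positivity
  set C1 := 2 * γ * dmax * L1 / (dmin * (1 - γ)) with hC1def
  set C2 := 2 * α * γ * dmax * L2 with hC2def
  have hC1nonneg : 0 ≤ C1 := by rw [hC1def]; positivity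
  have hC2nonneg : 0 ≤ C2 := by rw [hC2def]; positivity
  have hC1eq : α * dmin * (1 - γ) * C1 = 2 * α * γ * dmax * L1 := by
    rw [hC1def]; field_simp
  have hpow : ∀ k : ℕ, ρ * ((k:ℝ) * ρ ^ (k - 1)) = (k:ℝ) * ρ ^ k := by
    intro k
    cases k with
    | zero => simp
    | succ m =>
      simp only [Nat.add_sub_cancel, pow_succ]
      push_cast
      ring
  have key : ∀ k, u k ≤ C1 + C2 * (k:ℝ) * ρ ^ (k - 1) := by
    intro k
    induction k with
    | zero => simpa [hu0eq] using hC1nonneg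
    | succ k ih =>
      have h1 : ρ * u k ≤ ρ * (C1 + C2 * (k:ℝ) * ρ ^ (k - 1)) :=
        mul_le_mul_of_nonneg_left ih hρ0.le
      have h2 : 2 * α * γ * dmax * l k ≤ 2 * α * γ * dmax * (L1 + L2 * ρ ^ k) :=
        mul_le_mul_of_nonneg_left (hl k) (by positivity)
      have h3 := hu k
      have e1 : ρ * (C1 + C2 * (k:ℝ) * ρ ^ (k - 1)) = ρ * C1 + C2 * ((k:ℝ) * ρ ^ k) := by
        rw [← hpow k]; ring
      have e2 : C1 + C2 * ((k:ℕ)+1 : ℝ) * ρ ^ ((k+1) - 1)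
          = ρ * C1 + 2 * α * γ * dmax * L1 + (C2 * ((k:ℝ) * ρ ^ k)
            + 2 * α * γ * dmax * (L2 * ρ ^ k)) := by
        have : ρ * C1 = C1 - α * dmin * (1 - γ) * C1 := by rw [hρdef]; ring
        rw [this, hC1eq, Nat.add_sub_cancel, hC2def]
        push_cast
        ring
      have : u (k + 1) ≤ C1 + C2 * ((k:ℕ)+1 : ℝ) * ρ ^ ((k+1) - 1) := by
        rw [e2]
        calc u (k+1) ≤ ρ * u k + 2 * α * γ * dmax * l k := h3
          _ ≤ ρ * (C1 + C2 * (k:ℝ) * ρ ^ (k - 1)) + 2 * α * γ * dmax * (L1 + L2 * ρ ^ k) :=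
              add_le_add h1 h2
          _ = ρ * C1 + 2 * α * γ * dmax * L1 + (C2 * ((k:ℝ) * ρ ^ k)
              + 2 * α * γ * dmax * (L2 * ρ ^ k)) := by rw [e1]; ring
      simpa using this
  have h52 : (1 - γ) ^ ((5:ℝ)/2) = (1 - γ) ^ ((3:ℝ)/2) * (1 - γ) := by
    rw [show (5:ℝ)/2 = 3/2 + 1 by norm_num, Real.rpow_add h1γ, Real.rpow_one]
  have h32 : dmin ^ ((3:ℝ)/2) = Real.sqrt dmin * dmin := by
    rw [show (3:ℝ)/2 = 1/2 + 1 by norm_num, Real.rpow_add hdmin, Real.rpow_one,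
      ← Real.sqrt_eq_rpow]
  have hkey : L1 + C1 ≤ 9 * dmax * n * Real.sqrt α /
      (dmin ^ ((3:ℝ)/2) * (1 - γ) ^ ((5:ℝ)/2)) := by
    have hsum : L1 + C1 = 3 * Real.sqrt α * n * (dmin * (1 - γ) + 2 * γ * dmax) /
        (Real.sqrt dmin * (1 - γ) ^ ((3:ℝ)/2) * (dmin * (1 - γ))) := by
      rw [hC1def, hL1def]; field_simp
    rw [hsum, h52, h32]
    rw [div_le_div_iff₀ (by positivity) (by positivity)]
    have hfact : dmin * (1 - γ) + 2 * γ * dmax ≤ 3 * dmax := by nlinarith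
    nlinarith [mul_pos (mul_pos hsα hn0) (mul_pos (mul_pos hsd hP) (mul_pos hdmin h1γ)),
      mul_pos hsα hn0, mul_pos (mul_pos hsd hP) (mul_pos hdmin h1γ)]
  have hC2eq : C2 = 4 * α * γ * dmax * n ^ ((3:ℝ)/2) / (1 - γ) := by
    rw [hC2def, hL2def]; field_simp; ring
  intro k
  have h1 := helu k
  have h2 := hl k
  have h3 := key k
  rw [hC2eq] at h3
  have hpk : 0 ≤ ρ ^ k := pow_nonneg hρ0.le k
  linarith
end
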